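/- arXiv:1710.05582 — 2 statements merged into one kernel-verified Lean document; each statement's English description precedes it below -/
import Mathlib

section
/- Removing from a word w : Fin n → A the positions in the interval [u, v) (where u < v and u, v have equal modulo-l counting profiles) yields a shorter word w' such that for every letter a, the total count of a in w' is congruent modulo l to the total count of a in w. -/
/-- Removing from a word `w : Fin n → A` the positions in `[u, v)`, where
`u < v` have equal modulo-`l` counting profiles, yields a shorter word `w'`
(the concatenation of `w` on `[0,u)` and `w` on `[v,n)`) in which every
letter's total count is congruent modulo `l` to its total count in `w`. -/
theorem stmt_3 {A : Type*} [DecidableEq A] (n l : ℕ) (hl : 0 < l)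
    (w : Fin n → A) (u v : Fin n) (huv : u < v)
    (hbefore : ∀ a : A,
      (Finset.univ.filter fun q : Fin n => q < u ∧ w q = a).card % l =
      (Finset.univ.filter fun q : Fin n => q < v ∧ w q = a).card % l)
    (hafter : ∀ a : A,
      (Finset.univ.filter fun q : Fin n => u < q ∧ w q = a).card % l =
      (Finset.univ.filter fun q : Fin n => v < q ∧ w q = a).card % l)
    (w' : Fin (n - ((v : ℕ) - (u : ℕ))) → A)
    (hw' : ∀ i : Fin (n - ((v : ℕ) - (u : ℕ))),
      w' i = if h : (i : ℕ) < (u : ℕ) then w ⟨(i : ℕ), by omega⟩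
             else w ⟨(i : ℕ) + ((v : ℕ) - (u : ℕ)), by omega⟩) :
    ∀ a : A,
      (Finset.univ.filter fun i => w' i = a).card % l =
      (Finset.univ.filter fun q : Fin n => w q = a).card % l := by
  intro a
  have huv' : (u : ℕ) < (v : ℕ) := huv
  have hvn : (v : ℕ) < n := v.isLt
  have hw'' : ∀ i : Fin (n - ((v : ℕ) - (u : ℕ))),
      w' i = w ⟨if (i : ℕ) < (u : ℕ) then (i : ℕ) else (i : ℕ) + ((v : ℕ) - (u : ℕ)),
        by have := i.isLt; split <;> omega⟩ := by
    intro i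
    rw [hw' i]
    split
    · next h => exact congrArg w (Fin.ext (by simp [h]))
    · next h => exact congrArg w (Fin.ext (by simp [h]))
  -- the count in w' equals count of positions in [0,u) ∪ [v,n) with letter a
  have key : (Finset.univ.filter fun i => w' i = a).card =
      (Finset.univ.filter fun q : Fin n =>
        ((q : ℕ) < (u : ℕ) ∨ (v : ℕ) ≤ (q : ℕ)) ∧ w q = a).card := by
    refine Finset.card_bij (fun (i : Fin (n - ((v : ℕ) - (u : ℕ)))) _ =>
      (⟨if (i : ℕ) < (u : ℕ) then (i : ℕ) else (i : ℕ) + ((v : ℕ) - (u : ℕ)),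
        by have := i.isLt; split <;> omega⟩ : Fin n)) ?_ ?_ ?_
    · intro i hi
      simp only [Finset.mem_filter, Finset.mem_univ, true_and] at hi ⊢
      rw [hw''] at hi
      refine ⟨?_, hi⟩
      have := i.isLt
      by_cases h : (i : ℕ) < (u : ℕ)
      · left; simpa [h] using h
      · right; simp [h]; omega
    · intro i _ j _ hij
      have := congrArg (Fin.val) hij
      simp only at this
      apply Fin.ext
      split_ifs at this <;> omega
    · intro q hq
      simp only [Finset.mem_filter, Finset.mem_univ, true_and] at hq
      obtain ⟨hq1, hq2⟩ := hq
      refine ⟨⟨if (q : ℕ) < (u : ℕ) then (q : ℕ) else (q : ℕ) - ((v : ℕ) - (u : ℕ)),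
        by have := q.isLt; split <;> omega⟩, ?_, ?_⟩
      · simp only [Finset.mem_filter, Finset.mem_univ, true_and]
        rw [hw'']
        refine Eq.trans (congrArg w (Fin.ext ?_)) hq2
        simp only [Fin.val_mk]
        split_ifs <;> omega
      · apply Fin.ext
        simp only [Fin.val_mk]
        split_ifs <;> omega
  rw [key]
  -- split the union into two disjoint parts
  have split1 : (Finset.univ.filter fun q : Fin n =>
        ((q : ℕ) < (u : ℕ) ∨ (v : ℕ) ≤ (q : ℕ)) ∧ w q = a).card =
      (Finset.univ.filter fun q : Fin n => q < u ∧ w q = a).card +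
      (Finset.univ.filter fun q : Fin n => (v : ℕ) ≤ (q : ℕ) ∧ w q = a).card := by
    rw [← Finset.card_union_of_disjoint]
    · congr 1
      ext q
      simp only [Finset.mem_union, Finset.mem_filter, Finset.mem_univ, true_and, Fin.lt_def]
      tauto
    · rw [Finset.disjoint_filter]
      rintro q _ ⟨h1, _⟩ ⟨h2, _⟩
      have : (q : ℕ) < (u : ℕ) := h1
      omega
  have split2 : (Finset.univ.filter fun q : Fin n => w q = a).card =
      (Finset.univ.filter fun q : Fin n => q < v ∧ w q = a).card +
      (Finset.univ.filter fun q : Fin n => (v : ℕ) ≤ (q : ℕ) ∧ w q = a).card := by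
    rw [← Finset.card_union_of_disjoint]
    · congr 1
      ext q
      simp only [Finset.mem_union, Finset.mem_filter, Finset.mem_univ, true_and, Fin.lt_def]
      constructor
      · intro h
        rcases lt_or_ge (q : ℕ) (v : ℕ) with h' | h'
        · exact Or.inl ⟨h', h⟩
        · exact Or.inr ⟨h', h⟩
      · tauto
    · rw [Finset.disjoint_filter]
      rintro q _ ⟨h1, _⟩ ⟨h2, _⟩
      have : (q : ℕ) < (v : ℕ) := h1
      omega
  rw [split1, split2]
  exact Nat.ModEq.add_right _ (hbefore a)
end

section
/- The formula ∃^{≥2ⁿ mod 2·2ⁿ} x p(x) of length O(n) in FO²MOD has no equivalent formula using only exact modulo quantifiers ∃^{=k,l} of length less than 2ⁿ: more concretely, any Boolean combination of formulas ∃^{=i, 2·2ⁿ} x p(x) equivalent to 'the count of p-elements mod 2·2ⁿ is ≥ 2ⁿ' must contain at least 2ⁿ distinct such formulas. -/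
/-- **Succinctness of threshold modulo quantifiers.** Over structures with one
unary predicate `p`, the atomic formula `∃^{=i, 2·2ⁿ} x p(x)` is true in a
structure with `N` elements satisfying `p` iff `N % (2·2ⁿ) = i`. Any Boolean
combination `F` of such formulas, with exact residues drawn from a finite set
`atoms`, that is equivalent to `∃^{≥2ⁿ mod 2·2ⁿ} x p(x)` (i.e. to
`N % (2·2ⁿ) ≥ 2ⁿ`) must use at least `2ⁿ` distinct atomic formulas. -/
theorem stmt_15 (n : ℕ) (atoms : Finset ℕ)
    (F : ({ i // i ∈ atoms } → Bool) → Bool)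
    (hF : ∀ N : ℕ,
      F (fun i => decide (N % (2 * 2 ^ n) = i.val)) = true ↔ 2 ^ n ≤ N % (2 * 2 ^ n)) :
    2 ^ n ≤ atoms.card := by
  by_cases h : ∃ r', r' < 2 ^ n ∧ r' ∉ atoms
  · obtain ⟨r', hr', hr'a⟩ := h
    have hsub : Finset.Ico (2 ^ n) (2 * 2 ^ n) ⊆ atoms := by
      intro r hr
      rw [Finset.mem_Ico] at hr
      by_contra hra
      have hval : (fun i : {i // i ∈ atoms} => decide (r % (2 * 2 ^ n) = i.val)) =
          (fun i : {i // i ∈ atoms} => decide (r' % (2 * 2 ^ n) = i.val)) := by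
        funext i
        have h1 : r % (2 * 2 ^ n) = r := Nat.mod_eq_of_lt hr.2
        have h2 : r' % (2 * 2 ^ n) = r' := Nat.mod_eq_of_lt (lt_of_lt_of_le hr'
          (Nat.le_mul_of_pos_left _ (by norm_num)))
        rw [h1, h2]
        simp only [decide_eq_decide]
        constructor
        · intro he; exact absurd (he ▸ i.2) hra
        · intro he; exact absurd (he ▸ i.2) hr'a
      have ht : 2 ^ n ≤ r % (2 * 2 ^ n) := by
        rw [Nat.mod_eq_of_lt hr.2]; exact hr.1
      have := (hF r).2 ht
      rw [hval] at this
      have := (hF r').1 this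
      rw [Nat.mod_eq_of_lt (lt_of_lt_of_le hr' (Nat.le_mul_of_pos_left _ (by norm_num)))] at this
      omega
    calc 2 ^ n = (Finset.Ico (2 ^ n) (2 * 2 ^ n)).card := by
          rw [Nat.card_Ico]; omega
      _ ≤ atoms.card := Finset.card_le_card hsub
  · push_neg at h
    have hsub : Finset.range (2 ^ n) ⊆ atoms := by
      intro r hr
      exact h r (Finset.mem_range.1 hr)
    calc 2 ^ n = (Finset.range (2 ^ n)).card := (Finset.card_range _).symm
      _ ≤ atoms.card := Finset.card_le_card hsub
end
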